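/- Let X be a geodesic metric space, N a Morse gauge, and let ℓ₁, ℓ₂ be N-Morse geodesics in X with ℓ₁(0) = ℓ₂(0) = e. Suppose there exists t₀ ≥ 0 such that d(ℓ₁(t), ℓ₂(t)) > 4N(3,0) for all t ≥ t₀ (within the domains of ℓ₁, ℓ₂) and d(ℓ₁(t₀), ℓ₂(t₀)) ≤ 6N(3,0). Let t₁, t₂ ≥ t₀ be in the respective domains, set x_i = ℓ_i(t₀) and y_i = ℓ_i(t_i), and let P be the arc-length parametrized path obtained by following ℓ₁ from y₁ back to x₁, then any geodesic from x₁ to x₂, then ℓ₂ from x₂ to y₂. Then P is a (1, 12N(3,0))-quasi-geodesic; in particular d(y₁, y₂) ≥ d(y₁, x₁) + d(x₁, x₂) + d(x₂, y₂) − 12N(3,0). -/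

import Mathlib

open Set Filter

section Defs

variable {X : Type*} [MetricSpace X]

/-- A geodesic segment of length `L`, parametrized by arc length on `[0, L]`. -/
def IsGeodesicSeg (γ : ℝ → X) (L : ℝ) : Prop :=
  0 ≤ L ∧ ∀ s ∈ Icc (0:ℝ) L, ∀ t ∈ Icc (0:ℝ) L, dist (γ s) (γ t) = |s - t|

/-- A geodesic from `x` to `y`, parametrized by arc length on `[0, dist x y]`. -/
def IsGeodesicFromTo (γ : ℝ → X) (x y : X) : Prop :=
  IsGeodesicSeg γ (dist x y) ∧ γ 0 = x ∧ γ (dist x y) = y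

/-- A geodesic ray, parametrized by arc length on `[0, ∞)`. -/
def IsGeodesicRay (ℓ : ℝ → X) : Prop :=
  ∀ s ∈ Ici (0:ℝ), ∀ t ∈ Ici (0:ℝ), dist (ℓ s) (ℓ t) = |s - t|

/-- A geodesic metric space: any two points are joined by a geodesic. -/
def GeodesicSpace (X : Type*) [MetricSpace X] : Prop :=
  ∀ x y : X, ∃ γ : ℝ → X, IsGeodesicFromTo γ x y

/-- A `(K, C)`-quasi-geodesic defined on the interval `I ⊆ ℝ`. -/
def IsQuasiGeodesicOn (K C : ℝ) (I : Set ℝ) (σ : ℝ → X) : Prop :=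
  ∀ s ∈ I, ∀ t ∈ I,
    |s - t| / K - C ≤ dist (σ s) (σ t) ∧ dist (σ s) (σ t) ≤ K * |s - t| + C

/-- A Morse gauge: a nonnegative real `N K C` for every `K ≥ 1`, `C ≥ 0`. -/
def IsMorseGauge (N : ℝ → ℝ → ℝ) : Prop :=
  ∀ K C : ℝ, 1 ≤ K → 0 ≤ C → 0 ≤ N K C

/-- A subset `G ⊆ X` is `N`-Morse if for all `K ≥ 1`, `C ≥ 0`, every
`(K,C)`-quasi-geodesic with endpoints on `G` is contained in the closed
`N K C`-neighbourhood of `G`. -/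
def IsMorseSet (N : ℝ → ℝ → ℝ) (G : Set X) : Prop :=
  ∀ K C : ℝ, 1 ≤ K → 0 ≤ C → ∀ a b : ℝ, a ≤ b → ∀ σ : ℝ → X,
    IsQuasiGeodesicOn K C (Icc a b) σ → σ a ∈ G → σ b ∈ G →
    ∀ s ∈ Icc a b, ∃ g ∈ G, dist (σ s) g ≤ N K C

/-- An `N`-Morse geodesic from `x` to `y`. -/
def IsMorseGeodesicFromTo (N : ℝ → ℝ → ℝ) (γ : ℝ → X) (x y : X) : Prop :=
  IsGeodesicFromTo γ x y ∧ IsMorseSet N (γ '' Icc 0 (dist x y))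

/-- An `N`-Morse geodesic ray. -/
def IsMorseRay (N : ℝ → ℝ → ℝ) (ℓ : ℝ → X) : Prop :=
  IsGeodesicRay ℓ ∧ IsMorseSet N (ℓ '' Ici 0)

/-- The stratum `X^(N)_e`: points joined to `e` by an `N`-Morse geodesic. -/
def morseStratum (N : ℝ → ℝ → ℝ) (e : X) : Set X :=
  {y | ∃ γ : ℝ → X, IsMorseGeodesicFromTo N γ e y}

/-- The Gromov product `(x·y)_w`. -/
noncomputable def gprod (w x y : X) : ℝ := (dist w x + dist w y - dist x y) / 2

/-- A `B`-quasi-convex subset: geodesics with endpoints in `Y` stay in the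
closed `B`-neighbourhood of `Y`. -/
def IsQuasiConvex (B : ℝ) (Y : Set X) : Prop :=
  ∀ x ∈ Y, ∀ y ∈ Y, ∀ γ : ℝ → X, IsGeodesicFromTo γ x y →
    ∀ s ∈ Icc (0:ℝ) (dist x y), ∃ g ∈ Y, dist (γ s) g ≤ B

/-- An `N`-stable subset: quasi-convex, and any two of its points are joined
by an `N`-Morse geodesic of `X`. -/
def IsStableSubset (N : ℝ → ℝ → ℝ) (Y : Set X) : Prop :=
  (∃ B : ℝ, 0 ≤ B ∧ IsQuasiConvex B Y) ∧
    ∀ x ∈ Y, ∀ y ∈ Y, ∃ γ : ℝ → X, IsMorseGeodesicFromTo N γ x y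

variable {Y : Type*} [MetricSpace Y]

/-- A `(K,C)`-quasi-isometric embedding. -/
def IsQIEmbedding (K C : ℝ) (q : X → Y) : Prop :=
  ∀ x x' : X,
    dist x x' / K - C ≤ dist (q x) (q x') ∧ dist (q x) (q x') ≤ K * dist x x' + C

/-- A `(K,C)`-quasi-isometry. -/
def IsQuasiIsometry (K C : ℝ) (q : X → Y) : Prop :=
  IsQIEmbedding K C q ∧ ∀ y : Y, ∃ x : X, dist y (q x) ≤ C

end Defs

section Boundary

variable {X : Type*} [MetricSpace X]

/-- A sequence converges at infinity with respect to the basepoint `e`. -/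
def ConvAtInf (e : X) (f : ℕ → X) : Prop :=
  Tendsto (fun p : ℕ × ℕ => gprod e (f p.1) (f p.2)) atTop atTop

/-- Two sequences converging at infinity are equivalent. -/
def EquivAtInf (e : X) (f g : ℕ → X) : Prop :=
  Tendsto (fun p : ℕ × ℕ => gprod e (f p.1) (g p.2)) atTop atTop

/-- Sequences in `S` converging at infinity. -/
abbrev BSeq (S : Set X) (e : X) : Type _ :=
  {f : ℕ → X // (∀ n, f n ∈ S) ∧ ConvAtInf e f}

/-- The sequential boundary of `S ⊆ X` with basepoint `e`: sequences in `S`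
converging at infinity, up to equivalence. -/
def SeqBoundary (S : Set X) (e : X) : Type _ :=
  Quot (fun f g : BSeq S e => EquivAtInf e f.1 g.1)

/-- The boundary point represented by a convergent sequence. -/
def SeqBoundary.mk {S : Set X} {e : X} (f : BSeq S e) : SeqBoundary S e :=
  Quot.mk _ f

/-- The liminf of Gromov products of two sequences, valued in `EReal`. -/
noncomputable def seqGP (e : X) (f g : ℕ → X) : EReal :=
  Filter.liminf (fun p : ℕ × ℕ => ((gprod e (f p.1) (g p.2) : ℝ) : EReal)) atTop

/-- The Gromov product of two boundary points: the supremum over representing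
sequences of the liminf of Gromov products. -/
noncomputable def bGP (S : Set X) (e : X) (ξ η : SeqBoundary S e) : EReal :=
  sSup {r : EReal | ∃ f g : BSeq S e,
    SeqBoundary.mk f = ξ ∧ SeqBoundary.mk g = η ∧ r = seqGP e f.1 g.1}

open Classical in
/-- `exp (−ε·r)` for an extended real `r`, with value `0` at `r = ⊤`. -/
noncomputable def visGauge (ε : ℝ) (r : EReal) : ℝ :=
  if r = ⊤ then 0 else Real.exp (-ε * r.toReal)

/-- `d` is a visual metric on the sequential boundary of `S`:
a metric comparable to `exp(−ε·(Gromov product))` for some parameter `ε > 0`. -/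
def IsVisualMetric (S : Set X) (e : X)
    (d : SeqBoundary S e → SeqBoundary S e → ℝ) : Prop :=
  (∀ ξ η, 0 ≤ d ξ η) ∧ (∀ ξ η, d ξ η = d η ξ) ∧
  (∀ ξ η ζ, d ξ ζ ≤ d ξ η + d η ζ) ∧ (∀ ξ η, d ξ η = 0 ↔ ξ = η) ∧
  ∃ ε : ℝ, 0 < ε ∧ ∃ k₁ : ℝ, 0 < k₁ ∧ ∃ k₂ : ℝ, 0 < k₂ ∧
    ∀ ξ η, k₁ * visGauge ε (bGP S e ξ η) ≤ d ξ η ∧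
      d ξ η ≤ k₂ * visGauge ε (bGP S e ξ η)

/-- `η` is (the restriction of) a self-homeomorphism of `[0,∞)`. -/
def IsHomeoIci (η : ℝ → ℝ) : Prop :=
  ContinuousOn η (Ici 0) ∧ StrictMonoOn η (Ici 0) ∧ η 0 = 0 ∧
    Tendsto η atTop atTop ∧ ∀ t ∈ Ici (0:ℝ), 0 ≤ η t

/-- `F` is a quasi-symmetry onto its image, for the "distances" `dA`, `dB`. -/
def IsQuasiSymmetryOnto {A B : Type*} (dA : A → A → ℝ) (dB : B → B → ℝ)
    (F : A → B) : Prop :=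
  Function.Injective F ∧ ∃ η : ℝ → ℝ, IsHomeoIci η ∧
    ∀ x y z : A, x ≠ y → x ≠ z → y ≠ z →
      dB (F x) (F y) / dB (F x) (F z) ≤ η (dA x y / dA x z)

end Boundary

/-- `X` (with basepoint `x`) is stably subsumed by `Y` (with basepoint `y`):
every stratum of `X` quasi-isometrically embeds in some stratum of `Y`. -/
def StablySubsumed (X Y : Type*) [MetricSpace X] [MetricSpace Y]
    (x : X) (y : Y) : Prop :=
  ∀ N : ℝ → ℝ → ℝ, IsMorseGauge N →
    ∃ N' : ℝ → ℝ → ℝ, IsMorseGauge N' ∧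
      ∃ K C : ℝ, 1 ≤ K ∧ 0 ≤ C ∧ ∃ f : X → Y,
        (∀ a ∈ morseStratum N x, f a ∈ morseStratum N' y) ∧
        ∀ a ∈ morseStratum N x, ∀ b ∈ morseStratum N x,
          dist a b / K - C ≤ dist (f a) (f b) ∧ dist (f a) (f b) ≤ K * dist a b + C

/-- Durham–Taylor stability of `f : Y → X`. -/
def DTStable {Y X : Type*} [MetricSpace Y] [MetricSpace X] (f : Y → X) : Prop :=
  ∀ K C : ℝ, 1 ≤ K → 0 ≤ C → ∃ R : ℝ, 0 ≤ R ∧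
    ∀ a₁ b₁ a₂ b₂ : ℝ, a₁ ≤ b₁ → a₂ ≤ b₂ → ∀ σ₁ σ₂ : ℝ → X,
      IsQuasiGeodesicOn K C (Icc a₁ b₁) σ₁ → IsQuasiGeodesicOn K C (Icc a₂ b₂) σ₂ →
      σ₁ a₁ = σ₂ a₂ → σ₁ b₁ = σ₂ b₂ →
      σ₁ a₁ ∈ Set.range f → σ₁ b₁ ∈ Set.range f →
      (∀ s ∈ Icc a₁ b₁, ∃ t ∈ Icc a₂ b₂, dist (σ₁ s) (σ₂ t) ≤ R) ∧
      (∀ t ∈ Icc a₂ b₂, ∃ s ∈ Icc a₁ b₁, dist (σ₁ s) (σ₂ t) ≤ R)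

/-!
Two `N`-Morse geodesics `ℓ₁, ℓ₂` from `e` that are more than `4N(3,0)` apart at time `t₀`
diverge at full speed afterwards: `d(ℓ₁ u, ℓ₂ v) ≥ u + v - 2t₀`. Indeed, let `p` be a point
of a geodesic `[ℓ₁ u, ℓ₂ v]` closest to `e`. Following a geodesic from `e` to `p` and then
the geodesic towards `ℓ₁ u` (resp. `ℓ₂ v`) is a `(3,0)`-quasi-geodesic with endpoints on
`ℓ₁` (resp. `ℓ₂`). If `d(e,p) > t₀`, the Morse property puts the time-`t₀` point of `[e,p]`
within `2N(3,0)` of both `ℓ₁ t₀` and `ℓ₂ t₀`, which is impossible; so `d(e,p) ≤ t₀`, and the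
triangle inequality through `p` gives the bound.

For the concatenated path, points on the two outer legs are controlled by this bound, and
the middle leg has length at most `6N(3,0)`, so detours through it cost at most `12N(3,0)`.
-/

section Geodesics

variable {X : Type*} [MetricSpace X]

namespace IsGeodesicSeg

variable {γ : ℝ → X} {L : ℝ}

lemma dist_eq_sub (h : IsGeodesicSeg γ L) {s t : ℝ} (hs : 0 ≤ s) (hst : s ≤ t) (ht : t ≤ L) :
    dist (γ s) (γ t) = t - s := by
  rw [h.2 s ⟨hs, hst.trans ht⟩ t ⟨hs.trans hst, ht⟩, abs_sub_comm,
    abs_of_nonneg (sub_nonneg.2 hst)]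

lemma comp_const_add (h : IsGeodesicSeg γ L) {a b : ℝ} (ha : 0 ≤ a) (hab : a ≤ b)
    (hb : b ≤ L) : IsGeodesicSeg (fun r => γ (a + r)) (b - a) := by
  refine ⟨sub_nonneg.2 hab, fun s hs t ht => ?_⟩
  rw [h.2 _ ⟨by linarith [hs.1], by linarith [hs.2]⟩ _ ⟨by linarith [ht.1], by linarith [ht.2]⟩,
    add_sub_add_left_eq_sub]

lemma comp_const_sub (h : IsGeodesicSeg γ L) {a b : ℝ} (ha : 0 ≤ a) (hab : a ≤ b)
    (hb : b ≤ L) : IsGeodesicSeg (fun r => γ (b - r)) (b - a) := by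
  refine ⟨sub_nonneg.2 hab, fun s hs t ht => ?_⟩
  rw [h.2 _ ⟨by linarith [hs.2], by linarith [hs.1]⟩ _ ⟨by linarith [ht.2], by linarith [ht.1]⟩,
    sub_sub_sub_cancel_left, abs_sub_comm]

lemma lipschitzOnWith (h : IsGeodesicSeg γ L) : LipschitzOnWith 1 γ (Icc 0 L) :=
  LipschitzOnWith.of_dist_le_mul fun s hs t ht => by
    rw [h.2 s hs t ht, NNReal.coe_one, one_mul, Real.dist_eq]

lemma exists_isMinOn_dist (h : IsGeodesicSeg γ L) (e : X) :
    ∃ m ∈ Icc 0 L, IsMinOn (fun r => dist e (γ r)) (Icc 0 L) m :=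
  isCompact_Icc.exists_isMinOn ⟨0, le_rfl, h.1⟩
    ((continuous_const.dist continuous_id).comp_continuousOn h.lipschitzOnWith.continuousOn)

/-- Comparing distances to `γ 0` shows that the point of `γ` near `w` has parameter near `r`. -/
lemma dist_le_two_mul_of_dist_le (h : IsGeodesicSeg γ L) {w : X} {r c M : ℝ}
    (hr : r ∈ Icc 0 L) (hw : dist (γ 0) w = r) (hc : c ∈ Icc 0 L) (hwc : dist w (γ c) ≤ M) :
    dist w (γ r) ≤ 2 * M := by
  have hc0 : dist (γ 0) (γ c) = c := by simpa using h.dist_eq_sub le_rfl hc.1 hc.2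
  have hcr : |c - r| ≤ M := abs_sub_le_iff.2
    ⟨by linarith [dist_triangle (γ 0) w (γ c)], by linarith [dist_triangle_right (γ 0) w (γ c)]⟩
  calc dist w (γ r) ≤ dist w (γ c) + dist (γ c) (γ r) := dist_triangle _ _ _
    _ = dist w (γ c) + |c - r| := by rw [h.2 c hc r hr]
    _ ≤ 2 * M := by linarith

end IsGeodesicSeg

lemma isQuasiGeodesicOn_iff_of_le {K C : ℝ} {I : Set ℝ} {σ : ℝ → X} :
    IsQuasiGeodesicOn K C I σ ↔ ∀ s ∈ I, ∀ t ∈ I, s ≤ t →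
      (t - s) / K - C ≤ dist (σ s) (σ t) ∧ dist (σ s) (σ t) ≤ K * (t - s) + C := by
  refine ⟨fun h s hs t ht hst => ?_, fun h s hs t ht => ?_⟩
  · simpa [abs_sub_comm s t, abs_of_nonneg (sub_nonneg.2 hst)] using h s hs t ht
  · rcases le_total s t with hst | hts
    · rw [abs_sub_comm, abs_of_nonneg (sub_nonneg.2 hst)]
      exact h s hs t ht hst
    · rw [abs_of_nonneg (sub_nonneg.2 hts), dist_comm]
      exact h t ht s hs hts

lemma IsGeodesicSeg.isQuasiGeodesicOn {γ : ℝ → X} {L C : ℝ} (h : IsGeodesicSeg γ L)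
    (hC : 0 ≤ C) : IsQuasiGeodesicOn 1 C (Icc 0 L) γ :=
  isQuasiGeodesicOn_iff_of_le.2 fun s hs t ht hst => by
    rw [h.dist_eq_sub hs.1 hst ht.2, div_one, one_mul]
    constructor <;> linarith

end Geodesics

section Concatenation

variable {X : Type*} {α β : ℝ → X} {a s : ℝ}

noncomputable def concatAt (α β : ℝ → X) (a : ℝ) : ℝ → X :=
  fun s => if s ≤ a then α s else β (s - a)

lemma concatAt_of_le (h : s ≤ a) : concatAt α β a s = α s := if_pos h

lemma concatAt_of_ge (hαβ : α a = β 0) (h : a ≤ s) : concatAt α β a s = β (s - a) := by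
  rcases h.eq_or_lt with rfl | h
  · rw [concatAt_of_le le_rfl, sub_self, hαβ]
  · exact if_neg h.not_ge

lemma concatAt_concatAt {γ : ℝ → X} {b : ℝ} :
    concatAt α (concatAt β γ b) a =
      fun s => if s ≤ a then α s else if s ≤ a + b then β (s - a) else γ (s - a - b) := by
  funext s
  simp only [concatAt, sub_le_iff_le_add']

lemma concatAt_add (hαβ : α a = β 0) {r : ℝ} (hr : 0 ≤ r) : concatAt α β a (a + r) = β r := by
  rw [concatAt_of_ge hαβ (le_add_of_nonneg_right hr), add_sub_cancel_left]

lemma concatAt_concatAt_add_add {γ : ℝ → X} {b c : ℝ} (hαβ : α a = β 0) (hβγ : β b = γ 0)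
    (hb : 0 ≤ b) (hc : 0 ≤ c) : concatAt α (concatAt β γ b) a (a + b + c) = γ c := by
  rw [add_assoc, concatAt_add (hαβ.trans (concatAt_of_le hb).symm) (add_nonneg hb hc),
    concatAt_add hβγ hc]

lemma isQuasiGeodesicOn_one_concatAt [MetricSpace X] {c C : ℝ}
    (hα : IsQuasiGeodesicOn 1 C (Icc 0 a) α) (hβ : IsQuasiGeodesicOn 1 C (Icc 0 c) β)
    (hαβ : α a = β 0)
    (hcross : ∀ s ∈ Icc 0 a, ∀ r ∈ Icc 0 c,
      a - s + r - C ≤ dist (α s) (β r) ∧ dist (α s) (β r) ≤ a - s + r + C) :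
    IsQuasiGeodesicOn 1 C (Icc 0 (a + c)) (concatAt α β a) := by
  rw [isQuasiGeodesicOn_iff_of_le] at hα hβ ⊢
  intro s hs t ht hst
  rcases le_or_gt t a with hta | hat
  · rw [concatAt_of_le (hst.trans hta), concatAt_of_le hta]
    exact hα s ⟨hs.1, hst.trans hta⟩ t ⟨ht.1, hta⟩ hst
  rw [concatAt_of_ge hαβ hat.le]
  rcases le_or_gt s a with hsa | has
  · rw [concatAt_of_le hsa, div_one, one_mul]
    have := hcross s ⟨hs.1, hsa⟩ (t - a) ⟨by linarith, by linarith [ht.2]⟩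
    constructor <;> linarith
  · rw [concatAt_of_ge hαβ has.le, ← sub_sub_sub_cancel_right t s a]
    exact hβ _ ⟨by linarith, by linarith [hs.2]⟩ _ ⟨by linarith, by linarith [ht.2]⟩
      (by linarith)

theorem isQuasiGeodesicOn_concatAt_concatAt [MetricSpace X] {γ : ℝ → X} {b c C : ℝ}
    (hα : IsGeodesicSeg α a) (hβ : IsGeodesicSeg β b) (hγ : IsGeodesicSeg γ c)
    (hαβ : α a = β 0) (hβγ : β b = γ 0) (hbC : 2 * b ≤ C)
    (hαγ : ∀ s ∈ Icc 0 a, ∀ r ∈ Icc 0 c, a - s + b + r - C ≤ dist (α s) (γ r)) :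
    IsQuasiGeodesicOn 1 C (Icc 0 (a + b + c)) (concatAt α (concatAt β γ b) a) := by
  have hC : 0 ≤ C := by linarith [hβ.1]
  have hβQ : α a = concatAt β γ b 0 := by rw [concatAt_of_le hβ.1, hαβ]
  have hQ : IsQuasiGeodesicOn 1 C (Icc 0 (b + c)) (concatAt β γ b) := by
    refine isQuasiGeodesicOn_one_concatAt (hβ.isQuasiGeodesicOn hC) (hγ.isQuasiGeodesicOn hC)
      hβγ fun u hu r hr => ?_
    have hub := hβ.dist_eq_sub hu.1 hu.2 le_rfl
    have h0r : dist (γ 0) (γ r) = r := by simpa using hγ.dist_eq_sub le_rfl hr.1 hr.2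
    rw [← hβγ] at h0r
    have := dist_triangle (β u) (β b) (γ r)
    have := dist_triangle_left (β b) (γ r) (β u)
    constructor <;> linarith [hu.1, hu.2]
  rw [add_assoc]
  refine isQuasiGeodesicOn_one_concatAt (hα.isQuasiGeodesicOn hC) hQ hβQ fun s hs u hu => ?_
  have hsa : dist (α s) (α a) = a - s := hα.dist_eq_sub hs.1 hs.2 le_rfl
  have hQu := ((isQuasiGeodesicOn_iff_of_le.1 hQ) 0 ⟨le_rfl, hu.1.trans hu.2⟩ u hu hu.1).2
  rw [← hβQ] at hQu
  have := dist_triangle (α s) (α a) (concatAt β γ b u)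
  refine ⟨?_, by linarith⟩
  rcases le_total u b with hub | hbu
  · rw [concatAt_of_le hub]
    have h0u : dist (β 0) (β u) = u := by simpa using hβ.dist_eq_sub le_rfl hu.1 hub
    rw [← hαβ] at h0u
    have := dist_triangle_right (α s) (α a) (β u)
    linarith
  · rw [concatAt_of_ge hβγ hbu]
    have := hαγ s hs (u - b) ⟨by linarith, by linarith [hu.2]⟩
    linarith

end Concatenation

section Morse

variable {X : Type*} [MetricSpace X]

/-- The distance from `η s` to `φ m` is at least `R - s` because `φ 0` is a point of `φ`
closest to `e`, and at least `m - (R - s)` by the triangle inequality through `φ 0`. -/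
lemma isQuasiGeodesicOn_concatAt_of_forall_le_dist {e : X} {η φ : ℝ → X} {R L : ℝ}
    (hη : IsGeodesicSeg η R) (hφ : IsGeodesicSeg φ L) (hη0 : η 0 = e) (hηφ : η R = φ 0)
    (hmin : ∀ m ∈ Icc 0 L, R ≤ dist e (φ m)) :
    IsQuasiGeodesicOn 3 0 (Icc 0 (R + L)) (concatAt η φ R) := by
  refine isQuasiGeodesicOn_iff_of_le.2 fun s hs t ht hst => ?_
  rcases le_or_gt t R with htR | hRt
  · rw [concatAt_of_le (hst.trans htR), concatAt_of_le htR, hη.dist_eq_sub hs.1 hst htR]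
    constructor <;> linarith
  rw [concatAt_of_ge hηφ hRt.le]
  rcases le_or_gt s R with hsR | hRs
  · rw [concatAt_of_le hsR]
    have hes : dist e (η s) = s := by simpa [hη0] using hη.dist_eq_sub le_rfl hs.1 hsR
    have hsx : dist (η s) (φ 0) = R - s := hηφ ▸ hη.dist_eq_sub hs.1 hsR le_rfl
    have hxt : dist (φ 0) (φ (t - R)) = t - R := by
      simpa using hφ.dist_eq_sub le_rfl (by linarith) (by linarith [ht.2])
    have := hmin (t - R) ⟨by linarith, by linarith [ht.2]⟩
    have := dist_triangle e (η s) (φ (t - R))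
    have := dist_triangle_left (φ 0) (φ (t - R)) (η s)
    have := dist_triangle (η s) (φ 0) (φ (t - R))
    constructor <;> linarith
  · rw [concatAt_of_ge hηφ hRs.le, hφ.dist_eq_sub (by linarith) (by linarith) (by linarith [ht.2])]
    constructor <;> linarith

lemma IsMorseSet.dist_le_of_forall_le_dist {N : ℝ → ℝ → ℝ} {ℓ η φ : ℝ → X} {L R L' r : ℝ}
    (hℓ : IsGeodesicSeg ℓ L) (hm : IsMorseSet N (ℓ '' Icc 0 L))
    (hη : IsGeodesicSeg η R) (hφ : IsGeodesicSeg φ L') (hη0 : η 0 = ℓ 0) (hηφ : η R = φ 0)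
    (hmin : ∀ m ∈ Icc 0 L', R ≤ dist (ℓ 0) (φ m)) (hend : φ L' ∈ ℓ '' Icc 0 L)
    (hr : r ∈ Icc 0 R) (hrL : r ≤ L) :
    dist (η r) (ℓ r) ≤ 2 * N 3 0 := by
  have hQG := isQuasiGeodesicOn_concatAt_of_forall_le_dist hη hφ hη0 hηφ hmin
  have hstart : concatAt η φ R 0 ∈ ℓ '' Icc 0 L := by
    rw [concatAt_of_le hη.1, hη0]
    exact ⟨0, ⟨le_rfl, hℓ.1⟩, rfl⟩
  have hfin : concatAt η φ R (R + L') ∈ ℓ '' Icc 0 L := by rwa [concatAt_add hηφ hφ.1]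
  obtain ⟨_, ⟨c, hc, rfl⟩, hrc⟩ := hm 3 0 (by norm_num) le_rfl 0 (R + L')
    (add_nonneg hη.1 hφ.1) _ hQG hstart hfin r ⟨hr.1, by linarith [hr.2, hφ.1]⟩
  rw [concatAt_of_le hr.2] at hrc
  have hr0 : dist (ℓ 0) (η r) = r := by simpa [hη0] using hη.dist_eq_sub le_rfl hr.1 hr.2
  exact hℓ.dist_le_two_mul_of_dist_le ⟨hr.1, hrL⟩ hr0 hc hrc

theorem add_sub_two_mul_le_dist_of_isMorseSet (hX : GeodesicSpace X) {N : ℝ → ℝ → ℝ}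
    {ℓ₁ ℓ₂ : ℝ → X} {L₁ L₂ t₀ u v : ℝ}
    (hg₁ : IsGeodesicSeg ℓ₁ L₁) (hg₂ : IsGeodesicSeg ℓ₂ L₂)
    (hm₁ : IsMorseSet N (ℓ₁ '' Icc 0 L₁)) (hm₂ : IsMorseSet N (ℓ₂ '' Icc 0 L₂))
    (h₀ : ℓ₁ 0 = ℓ₂ 0) (ht₀ : 0 ≤ t₀) (hfar : 4 * N 3 0 < dist (ℓ₁ t₀) (ℓ₂ t₀))
    (hu : u ∈ Icc t₀ L₁) (hv : v ∈ Icc t₀ L₂) :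
    u + v - 2 * t₀ ≤ dist (ℓ₁ u) (ℓ₂ v) := by
  obtain ⟨γ, hγ, hγu, hγv⟩ := hX (ℓ₁ u) (ℓ₂ v)
  set d := dist (ℓ₁ u) (ℓ₂ v)
  obtain ⟨m, hm, hmin⟩ := hγ.exists_isMinOn_dist (ℓ₁ 0)
  obtain ⟨η, hη, hη0, hηm⟩ := hX (ℓ₁ 0) (γ m)
  set R := dist (ℓ₁ 0) (γ m)
  have hR : R ≤ t₀ := by
    by_contra! hlt
    have hback : IsGeodesicSeg (fun r => γ (m - r)) m := by
      simpa using hγ.comp_const_sub le_rfl hm.1 hm.2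
    have hfwd : IsGeodesicSeg (fun r => γ (m + r)) (d - m) := hγ.comp_const_add hm.1 hm.2 le_rfl
    have h₁ : dist (η t₀) (ℓ₁ t₀) ≤ 2 * N 3 0 :=
      hm₁.dist_le_of_forall_le_dist hg₁ hη hback hη0 (by simpa using hηm)
        (fun r hr => hmin ⟨by linarith [hr.2], by linarith [hr.1, hm.2]⟩)
        ⟨u, ⟨ht₀.trans hu.1, hu.2⟩, by simp [hγu]⟩ ⟨ht₀, hlt.le⟩ (hu.1.trans hu.2)
    have h₂ : dist (η t₀) (ℓ₂ t₀) ≤ 2 * N 3 0 :=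
      hm₂.dist_le_of_forall_le_dist hg₂ hη hfwd (hη0.trans h₀) (by simpa using hηm)
        (fun r hr => h₀ ▸ hmin ⟨by linarith [hr.1, hm.1], by linarith [hr.2]⟩)
        ⟨v, ⟨ht₀.trans hv.1, hv.2⟩, by simp [hγv]⟩ ⟨ht₀, hlt.le⟩ (hv.1.trans hv.2)
    have := dist_triangle_left (ℓ₁ t₀) (ℓ₂ t₀) (η t₀)
    linarith
  have hu' : u ≤ R + m := by
    have h0u : dist (ℓ₁ 0) (ℓ₁ u) = u := by
      simpa using hg₁.dist_eq_sub le_rfl (ht₀.trans hu.1) hu.2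
    have hmu : dist (γ m) (γ 0) = m := by
      rw [dist_comm]; simpa using hγ.dist_eq_sub le_rfl hm.1 hm.2
    have := dist_triangle (ℓ₁ 0) (γ m) (γ 0)
    rw [hγu] at this hmu
    linarith
  have hv' : v ≤ R + (d - m) := by
    have h0v : dist (ℓ₁ 0) (ℓ₂ v) = v := by
      simpa [h₀] using hg₂.dist_eq_sub le_rfl (ht₀.trans hv.1) hv.2
    have := dist_triangle (ℓ₁ 0) (γ m) (γ d)
    rw [hγ.dist_eq_sub hm.1 hm.2 le_rfl, hγv] at this
    linarith
  linarith

end Morse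

theorem statement14_general {X : Type*} [MetricSpace X] (hX : GeodesicSpace X) (e : X)
    (N : ℝ → ℝ → ℝ)
    (ℓ₁ ℓ₂ : ℝ → X) (L₁ L₂ : ℝ)
    (hg₁ : IsGeodesicSeg ℓ₁ L₁) (hg₂ : IsGeodesicSeg ℓ₂ L₂)
    (hm₁ : IsMorseSet N (ℓ₁ '' Icc 0 L₁)) (hm₂ : IsMorseSet N (ℓ₂ '' Icc 0 L₂))
    (he₁ : ℓ₁ 0 = e) (he₂ : ℓ₂ 0 = e)
    (t₀ : ℝ) (ht₀ : 0 ≤ t₀)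
    (hfar : ∀ t : ℝ, t₀ ≤ t → t ≤ L₁ → t ≤ L₂ → 4 * N 3 0 < dist (ℓ₁ t) (ℓ₂ t))
    (hclose : dist (ℓ₁ t₀) (ℓ₂ t₀) ≤ 6 * N 3 0)
    (t₁ t₂ : ℝ) (ht₁ : t₀ ≤ t₁ ∧ t₁ ≤ L₁) (ht₂ : t₀ ≤ t₂ ∧ t₂ ≤ L₂)
    (g : ℝ → X) (hg : IsGeodesicFromTo g (ℓ₁ t₀) (ℓ₂ t₀)) :
    IsQuasiGeodesicOn 1 (12 * N 3 0)
      (Icc 0 ((t₁ - t₀) + dist (ℓ₁ t₀) (ℓ₂ t₀) + (t₂ - t₀)))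
      (fun s => if s ≤ t₁ - t₀ then ℓ₁ (t₁ - s)
        else if s ≤ t₁ - t₀ + dist (ℓ₁ t₀) (ℓ₂ t₀) then g (s - (t₁ - t₀))
        else ℓ₂ (t₀ + (s - (t₁ - t₀) - dist (ℓ₁ t₀) (ℓ₂ t₀)))) ∧
    dist (ℓ₁ t₁) (ℓ₂ t₂) ≥
      dist (ℓ₁ t₁) (ℓ₁ t₀) + dist (ℓ₁ t₀) (ℓ₂ t₀) + dist (ℓ₂ t₀) (ℓ₂ t₂)
        - 12 * N 3 0 := by
  set D := dist (ℓ₁ t₀) (ℓ₂ t₀)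
  obtain ⟨hgD, hg0, hgD'⟩ := hg
  have hfar₀ : 4 * N 3 0 < D := hfar t₀ le_rfl (ht₁.1.trans ht₁.2) (ht₂.1.trans ht₂.2)
  have hα := hg₁.comp_const_sub ht₀ ht₁.1 ht₁.2
  have hγ := hg₂.comp_const_add ht₀ ht₂.1 ht₂.2
  have hαβ : ℓ₁ (t₁ - (t₁ - t₀)) = g 0 := by rw [sub_sub_cancel, hg0]
  have hβγ : g D = ℓ₂ (t₀ + 0) := by rw [add_zero, hgD']
  have hQG := isQuasiGeodesicOn_concatAt_concatAt (C := 12 * N 3 0) hα hgD hγ hαβ hβγ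
    (by linarith) fun s hs r hr => by
      have := add_sub_two_mul_le_dist_of_isMorseSet hX hg₁ hg₂ hm₁ hm₂ (he₁.trans he₂.symm)
        ht₀ hfar₀ (u := t₁ - s) (v := t₀ + r) ⟨by linarith [hs.2], by linarith [hs.1, ht₁.2]⟩
        ⟨by linarith [hr.1], by linarith [hr.2, ht₂.2]⟩
      linarith
  refine ⟨by simpa only [concatAt_concatAt] using hQG, ?_⟩
  have hT : 0 ≤ t₁ - t₀ + D + (t₂ - t₀) := by linarith [hα.1, hγ.1, hgD.1]
  have hends := ((isQuasiGeodesicOn_iff_of_le.1 hQG) 0 ⟨le_rfl, hT⟩ _ ⟨hT, le_rfl⟩ hT).1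
  rw [concatAt_of_le hα.1, concatAt_concatAt_add_add (α := fun r => ℓ₁ (t₁ - r))
    (a := t₁ - t₀) hαβ hβγ hgD.1 hγ.1] at hends
  simp only [sub_zero, add_sub_cancel, div_one] at hends
  rw [dist_comm (ℓ₁ t₁) (ℓ₁ t₀), hg₁.dist_eq_sub ht₀ ht₁.1 ht₁.2, hg₂.dist_eq_sub ht₀ ht₂.1 ht₂.2]
  linarith

/-- if two `N`-Morse geodesics from `e` stay more than `4N(3,0)`
apart after time `t₀` and are `≤ 6N(3,0)` apart at `t₀`, then the concatenation
`ℓ₁(t₁) → ℓ₁(t₀) → ℓ₂(t₀) → ℓ₂(t₂)` is a `(1, 12N(3,0))`-quasi-geodesic; in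
particular the distance inequality holds. -/
theorem statement14 {X : Type*} [MetricSpace X] (hX : GeodesicSpace X) (e : X)
    (N : ℝ → ℝ → ℝ) (hN : IsMorseGauge N)
    (ℓ₁ ℓ₂ : ℝ → X) (L₁ L₂ : ℝ)
    (hg₁ : IsGeodesicSeg ℓ₁ L₁) (hg₂ : IsGeodesicSeg ℓ₂ L₂)
    (hm₁ : IsMorseSet N (ℓ₁ '' Icc 0 L₁)) (hm₂ : IsMorseSet N (ℓ₂ '' Icc 0 L₂))
    (he₁ : ℓ₁ 0 = e) (he₂ : ℓ₂ 0 = e)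
    (t₀ : ℝ) (ht₀ : 0 ≤ t₀)
    (hfar : ∀ t : ℝ, t₀ ≤ t → t ≤ L₁ → t ≤ L₂ → 4 * N 3 0 < dist (ℓ₁ t) (ℓ₂ t))
    (hclose : dist (ℓ₁ t₀) (ℓ₂ t₀) ≤ 6 * N 3 0)
    (t₁ t₂ : ℝ) (ht₁ : t₀ ≤ t₁ ∧ t₁ ≤ L₁) (ht₂ : t₀ ≤ t₂ ∧ t₂ ≤ L₂)
    (g : ℝ → X) (hg : IsGeodesicFromTo g (ℓ₁ t₀) (ℓ₂ t₀)) :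
    IsQuasiGeodesicOn 1 (12 * N 3 0)
      (Icc 0 ((t₁ - t₀) + dist (ℓ₁ t₀) (ℓ₂ t₀) + (t₂ - t₀)))
      (fun s => if s ≤ t₁ - t₀ then ℓ₁ (t₁ - s)
        else if s ≤ t₁ - t₀ + dist (ℓ₁ t₀) (ℓ₂ t₀) then g (s - (t₁ - t₀))
        else ℓ₂ (t₀ + (s - (t₁ - t₀) - dist (ℓ₁ t₀) (ℓ₂ t₀)))) ∧
    dist (ℓ₁ t₁) (ℓ₂ t₂) ≥
      dist (ℓ₁ t₁) (ℓ₁ t₀) + dist (ℓ₁ t₀) (ℓ₂ t₀) + dist (ℓ₂ t₀) (ℓ₂ t₂)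
        - 12 * N 3 0 :=
  statement14_general hX e N ℓ₁ ℓ₂ L₁ L₂ hg₁ hg₂ hm₁ hm₂ he₁ he₂ t₀ ht₀ hfar hclose t₁ t₂ ht₁ ht₂ g
    hg
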